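/- Let η, ρ be real constants with η ≠ 0, and let F(u, w, w̃) be a smooth real-valued function on an open set U ⊆ ℝ³. Define V = (η²F − F_{uu})/4, S = (ηF_w − F_{uw})/2, and S̃ = (ηF_{w̃} + F_{uw̃})/2. Then: (i) the identities S_u + ηS = 2V_w and −S̃_u + ηS̃ = 2V_{w̃} hold on U for every such F; and (ii) F satisfies equation (EWred) on U if and only if V·(S_{w̃} + S̃_w) = η(S·S̃ − e^{2ρu}) on U. -/

import Mathlib

/-!
V, S and S̃ are constant-coefficient linear combinations of partial derivatives of F, so the two
identities of (i), and S_{w̃} + S̃_w = η F_{ww̃}, reduce to the symmetry of the mixed partial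
derivatives of F and of F_u. With the latter, V (S_{w̃} + S̃_w) − η (S S̃ − e^{2ρu}) is −η/4 times
the defect of (EWred), and η ≠ 0 gives (ii).
-/

noncomputable section

/-- Partial derivatives of F(u, w, w̃) in its three arguments. -/
def pu (F : ℝ → ℝ → ℝ → ℝ) : ℝ → ℝ → ℝ → ℝ := fun u w wt => deriv (fun s => F s w wt) u
def pw (F : ℝ → ℝ → ℝ → ℝ) : ℝ → ℝ → ℝ → ℝ := fun u w wt => deriv (fun s => F u s wt) w
def pwt (F : ℝ → ℝ → ℝ → ℝ) : ℝ → ℝ → ℝ → ℝ := fun u w wt => deriv (fun s => F u w s) wt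

/-- Equation (EWred):
(η F_{w̃} + F_{uw̃})(η F_w − F_{uw}) − (η²F − F_{uu}) F_{ww̃} = 4 e^{2ρu}. -/
def EWred (η ρ : ℝ) (F : ℝ → ℝ → ℝ → ℝ) (u w wt : ℝ) : Prop :=
  (η * pwt F u w wt + pwt (pu F) u w wt) * (η * pw F u w wt - pw (pu F) u w wt)
    - (η ^ 2 * F u w wt - pu (pu F) u w wt) * pwt (pw F) u w wt
    = 4 * Real.exp (2 * ρ * u)

open Topology

section Partials

variable {U : Set (ℝ × ℝ × ℝ)} {G : ℝ → ℝ → ℝ → ℝ} {p : ℝ × ℝ × ℝ}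

lemma uncurry3_apply {α β γ δ : Type*} (G : α → β → γ → δ) (p : α × β × γ) :
    ↿G p = G p.1 p.2.1 p.2.2 :=
  rfl

lemma ContDiffOn.differentiableAt_of_isOpen {E E' : Type*} [NormedAddCommGroup E]
    [NormedSpace ℝ E] [NormedAddCommGroup E'] [NormedSpace ℝ E'] {s : Set E} {f : E → E'} {x : E}
    (hf : ContDiffOn ℝ (⊤ : ℕ∞) f s) (hs : IsOpen s) (hx : x ∈ s) :
    DifferentiableAt ℝ f x :=
  (hf.contDiffAt (hs.mem_nhds hx)).differentiableAt (by simp)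

def IsPartialAlong (D : (ℝ → ℝ → ℝ → ℝ) → ℝ → ℝ → ℝ → ℝ) (e : ℝ × ℝ × ℝ) : Prop :=
  ∀ G p, DifferentiableAt ℝ (↿G) p → ↿(D G) p = fderiv ℝ (↿G) p e

lemma isPartialAlong_pu : IsPartialAlong pu (1, 0, 0) := by
  rintro G ⟨u, w, wt⟩ hG
  exact (hG.hasFDerivAt.comp_hasDerivAt u
    ((hasDerivAt_id u).prodMk (hasDerivAt_const u (w, wt)))).deriv

lemma isPartialAlong_pw : IsPartialAlong pw (0, 1, 0) := by
  rintro G ⟨u, w, wt⟩ hG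
  exact (hG.hasFDerivAt.comp_hasDerivAt w ((hasDerivAt_const w u).prodMk
    ((hasDerivAt_id w).prodMk (hasDerivAt_const w wt)))).deriv

lemma isPartialAlong_pwt : IsPartialAlong pwt (0, 0, 1) := by
  rintro G ⟨u, w, wt⟩ hG
  exact (hG.hasFDerivAt.comp_hasDerivAt wt ((hasDerivAt_const wt u).prodMk
    ((hasDerivAt_const wt w).prodMk (hasDerivAt_id wt)))).deriv

namespace IsPartialAlong

variable {D D' : (ℝ → ℝ → ℝ → ℝ) → ℝ → ℝ → ℝ → ℝ} {e e' : ℝ × ℝ × ℝ}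

lemma contDiffOn (hD : IsPartialAlong D e) (hU : IsOpen U) (hG : ContDiffOn ℝ (⊤ : ℕ∞) (↿G) U) :
    ContDiffOn ℝ (⊤ : ℕ∞) (↿(D G)) U :=
  ((hG.fderiv_of_isOpen hU le_rfl).clm_apply contDiffOn_const).congr fun _ hq =>
    hD G _ (hG.differentiableAt_of_isOpen hU hq)

lemma differentiableAt (hD : IsPartialAlong D e) (hU : IsOpen U)
    (hG : ContDiffOn ℝ (⊤ : ℕ∞) (↿G) U) (hp : p ∈ U) : DifferentiableAt ℝ (↿(D G)) p :=
  (hD.contDiffOn hU hG).differentiableAt_of_isOpen hU hp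

lemma apply_apply (hD : IsPartialAlong D e) (hD' : IsPartialAlong D' e') (hU : IsOpen U)
    (hG : ContDiffOn ℝ (⊤ : ℕ∞) (↿G) U) (hp : p ∈ U) :
    ↿(D (D' G)) p = fderiv ℝ (fderiv ℝ (↿G)) p e e' := by
  have hloc : ↿(D' G) =ᶠ[𝓝 p] fun q => fderiv ℝ (↿G) q e' := by
    filter_upwards [hU.mem_nhds hp] with q hq using hD' G q (hG.differentiableAt_of_isOpen hU hq)
  rw [hD _ p (hD'.differentiableAt hU hG hp), hloc.fderiv_eq, fderiv_clm_apply
    ((hG.fderiv_of_isOpen hU le_rfl).differentiableAt_of_isOpen hU hp) (differentiableAt_const e')]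
  simp

lemma comm (hD : IsPartialAlong D e) (hD' : IsPartialAlong D' e') (hU : IsOpen U)
    (hG : ContDiffOn ℝ (⊤ : ℕ∞) (↿G) U) (hp : p ∈ U) :
    ↿(D (D' G)) p = ↿(D' (D G)) p := by
  rw [hD.apply_apply hD' hU hG hp, hD'.apply_apply hD hU hG hp]
  exact (hG.contDiffAt (hU.mem_nhds hp)).isSymmSndFDerivAt
    (by rw [minSmoothness_of_isRCLikeNormedField]; exact WithTop.coe_le_coe.mpr le_top) e e'

lemma apply_linear_comb (hD : IsPartialAlong D e) {H G₁ G₂ : ℝ → ℝ → ℝ → ℝ} {a b : ℝ}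
    (hH : ∀ u w wt, H u w wt = a * G₁ u w wt + b * G₂ u w wt)
    (h₁ : DifferentiableAt ℝ (↿G₁) p) (h₂ : DifferentiableAt ℝ (↿G₂) p) :
    ↿(D H) p = a * ↿(D G₁) p + b * ↿(D G₂) p := by
  have hH' : HasFDerivAt (↿H) (a • fderiv ℝ (↿G₁) p + b • fderiv ℝ (↿G₂) p) p := by
    rw [show ↿H = fun q => a * ↿G₁ q + b * ↿G₂ q from funext fun q => hH q.1 q.2.1 q.2.2]
    exact (h₁.hasFDerivAt.const_mul a).add (h₂.hasFDerivAt.const_mul b)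
  rw [hD H p hH'.differentiableAt, hH'.fderiv, hD G₁ p h₁, hD G₂ p h₂]
  rfl

end IsPartialAlong

end Partials

def ewredV (η : ℝ) (F : ℝ → ℝ → ℝ → ℝ) : ℝ → ℝ → ℝ → ℝ :=
  fun u w wt => (η ^ 2 * F u w wt - pu (pu F) u w wt) / 4

def ewredS (η : ℝ) (F : ℝ → ℝ → ℝ → ℝ) : ℝ → ℝ → ℝ → ℝ :=
  fun u w wt => (η * pw F u w wt - pw (pu F) u w wt) / 2

def ewredSt (η : ℝ) (F : ℝ → ℝ → ℝ → ℝ) : ℝ → ℝ → ℝ → ℝ :=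
  fun u w wt => (η * pwt F u w wt + pwt (pu F) u w wt) / 2

section FirstOrderForm

variable {η : ℝ} {U : Set (ℝ × ℝ × ℝ)} {F : ℝ → ℝ → ℝ → ℝ} {p : ℝ × ℝ × ℝ}
  (hU : IsOpen U) (hF : ContDiffOn ℝ (⊤ : ℕ∞) (↿F) U)
include hU hF

namespace IsPartialAlong

variable {D : (ℝ → ℝ → ℝ → ℝ) → ℝ → ℝ → ℝ → ℝ} {e : ℝ × ℝ × ℝ}

lemma apply_ewredV (hD : IsPartialAlong D e) (hp : p ∈ U) :
    ↿(D (ewredV η F)) p = η ^ 2 / 4 * ↿(D F) p + (-1 / 4) * ↿(D (pu (pu F))) p :=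
  hD.apply_linear_comb (fun _ _ _ => by simp only [ewredV]; ring)
    (hF.differentiableAt_of_isOpen hU hp)
    (isPartialAlong_pu.differentiableAt hU (isPartialAlong_pu.contDiffOn hU hF) hp)

lemma apply_ewredS (hD : IsPartialAlong D e) (hp : p ∈ U) :
    ↿(D (ewredS η F)) p = η / 2 * ↿(D (pw F)) p + (-1 / 2) * ↿(D (pw (pu F))) p :=
  hD.apply_linear_comb (fun _ _ _ => by simp only [ewredS]; ring)
    (isPartialAlong_pw.differentiableAt hU hF hp)
    (isPartialAlong_pw.differentiableAt hU (isPartialAlong_pu.contDiffOn hU hF) hp)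

lemma apply_ewredSt (hD : IsPartialAlong D e) (hp : p ∈ U) :
    ↿(D (ewredSt η F)) p = η / 2 * ↿(D (pwt F)) p + 1 / 2 * ↿(D (pwt (pu F))) p :=
  hD.apply_linear_comb (fun _ _ _ => by simp only [ewredSt]; ring)
    (isPartialAlong_pwt.differentiableAt hU hF hp)
    (isPartialAlong_pwt.differentiableAt hU (isPartialAlong_pu.contDiffOn hU hF) hp)

end IsPartialAlong

lemma pu_ewredS_add_mul_ewredS (hp : p ∈ U) :
    ↿(pu (ewredS η F)) p + η * ↿(ewredS η F) p = 2 * ↿(pw (ewredV η F)) p := by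
  rw [isPartialAlong_pu.apply_ewredS hU hF hp, isPartialAlong_pw.apply_ewredV hU hF hp,
    isPartialAlong_pu.comm isPartialAlong_pw hU hF hp,
    isPartialAlong_pu.comm isPartialAlong_pw hU (isPartialAlong_pu.contDiffOn hU hF) hp]
  simp only [uncurry3_apply, ewredS]
  ring

lemma neg_pu_ewredSt_add_mul_ewredSt (hp : p ∈ U) :
    -↿(pu (ewredSt η F)) p + η * ↿(ewredSt η F) p = 2 * ↿(pwt (ewredV η F)) p := by
  rw [isPartialAlong_pu.apply_ewredSt hU hF hp, isPartialAlong_pwt.apply_ewredV hU hF hp,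
    isPartialAlong_pu.comm isPartialAlong_pwt hU hF hp,
    isPartialAlong_pu.comm isPartialAlong_pwt hU (isPartialAlong_pu.contDiffOn hU hF) hp]
  simp only [uncurry3_apply, ewredSt]
  ring

lemma pwt_ewredS_add_pw_ewredSt (hp : p ∈ U) :
    ↿(pwt (ewredS η F)) p + ↿(pw (ewredSt η F)) p = η * ↿(pwt (pw F)) p := by
  rw [isPartialAlong_pwt.apply_ewredS hU hF hp, isPartialAlong_pw.apply_ewredSt hU hF hp,
    isPartialAlong_pw.comm isPartialAlong_pwt hU hF hp,
    isPartialAlong_pw.comm isPartialAlong_pwt hU (isPartialAlong_pu.contDiffOn hU hF) hp]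
  ring

lemma ewred_iff (hη : η ≠ 0) (ρ : ℝ) (hp : p ∈ U) :
    EWred η ρ F p.1 p.2.1 p.2.2 ↔ ↿(ewredV η F) p * (↿(pwt (ewredS η F)) p + ↿(pw (ewredSt η F)) p)
      = η * (↿(ewredS η F) p * ↿(ewredSt η F) p - Real.exp (2 * ρ * p.1)) := by
  rw [pwt_ewredS_add_pw_ewredSt hU hF hp, EWred]
  simp only [uncurry3_apply, ewredV, ewredS, ewredSt]
  constructor
  · intro h
    linear_combination (-(η / 4)) * h
  · intro h
    exact mul_left_cancel₀ (by positivity : η / 4 ≠ 0) (by linear_combination -h)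

end FirstOrderForm

theorem EWred_first_order_form (η ρ : ℝ) (hη : η ≠ 0)
    (U : Set (ℝ × ℝ × ℝ)) (hU : IsOpen U)
    (F : ℝ → ℝ → ℝ → ℝ)
    (hF : ContDiffOn ℝ (⊤ : ℕ∞) (fun p : ℝ × ℝ × ℝ => F p.1 p.2.1 p.2.2) U)
    (V S St : ℝ → ℝ → ℝ → ℝ)
    (hV : ∀ u w wt : ℝ, V u w wt = (η ^ 2 * F u w wt - pu (pu F) u w wt) / 4)
    (hS : ∀ u w wt : ℝ, S u w wt = (η * pw F u w wt - pw (pu F) u w wt) / 2)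
    (hSt : ∀ u w wt : ℝ, St u w wt = (η * pwt F u w wt + pwt (pu F) u w wt) / 2) :
    (∀ p ∈ U, pu S p.1 p.2.1 p.2.2 + η * S p.1 p.2.1 p.2.2 = 2 * pw V p.1 p.2.1 p.2.2
        ∧ -pu St p.1 p.2.1 p.2.2 + η * St p.1 p.2.1 p.2.2 = 2 * pwt V p.1 p.2.1 p.2.2)
    ∧ ((∀ p ∈ U, EWred η ρ F p.1 p.2.1 p.2.2)
        ↔ (∀ p ∈ U, V p.1 p.2.1 p.2.2 * (pwt S p.1 p.2.1 p.2.2 + pw St p.1 p.2.1 p.2.2)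
            = η * (S p.1 p.2.1 p.2.2 * St p.1 p.2.1 p.2.2 - Real.exp (2 * ρ * p.1)))) := by
  obtain rfl : V = ewredV η F := funext fun u => funext fun w => funext (hV u w)
  obtain rfl : S = ewredS η F := funext fun u => funext fun w => funext (hS u w)
  obtain rfl : St = ewredSt η F := funext fun u => funext fun w => funext (hSt u w)
  exact ⟨fun p hp => ⟨pu_ewredS_add_mul_ewredS hU hF hp, neg_pu_ewredSt_add_mul_ewredSt hU hF hp⟩,
    forall₂_congr fun p hp => ewred_iff hU hF hη ρ hp⟩

end
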